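/- arXiv:2405.09252 — 5 statements merged into one kernel-verified Lean document; each statement's English description precedes it below -/
import Mathlib

section
/- There are no positive integers x, y with gcd(x, y) = 1 and non-negative integers α, β such that x² + 3^α · 113^β = y⁴. -/
namespace Stmt5Aux


lemma pow_cycle (x p T n : ℕ) (h : x^T % p = 1) :
    x^n % p = x^(n % T) % p := by
  conv_lhs => rw [← Nat.div_add_mod n T]
  rw [pow_add, pow_mul, Nat.mul_mod, Nat.pow_mod, h, one_pow, ← Nat.mul_mod, one_mul]

lemma two_sq_mod (y n : ℕ) : (2*y^2) % n = (2*(y%n)*(y%n)) % n := by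
  have h : 2*y^2 = 2*y*y := by ring
  rw [h]
  exact ((Nat.ModEq.refl 2).mul (Nat.mod_modEq y n).symm).mul (Nat.mod_modEq y n).symm

set_option maxRecDepth 40000 in
set_option maxHeartbeats 1000000 in
lemma table : ∀ a < 30, ∀ b < 30,
    ∃ p ∈ [11,19,31,37,41,61,73],
      3^360 % p = 1 ∧ 113^360 % p = 1 ∧
      ∀ u < p, (2*u*u) % p ≠ (3^(12*a) % p + 113^(12*b+3) % p) % p := by decide

lemma L1 (y a b : ℕ) : 2*y^2 ≠ 3^(12*a) + 113^(12*b+3) := by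
  intro h
  obtain ⟨p, hp, h3, h113, hall⟩ := table (a % 30) (Nat.mod_lt a (by norm_num))
      (b % 30) (Nat.mod_lt b (by norm_num))
  have hp0 : 0 < p := by
    rcases Nat.eq_zero_or_pos p with rfl | h
    · rw [Nat.mod_zero] at h3
      exact absurd h3 (by norm_num)
    · exact h
  have e1 : (3:ℕ)^(12*a) % p = 3^(12*(a%30)) % p := by
    rw [pow_cycle 3 p 360 (12*a) h3, show (12*a)%360 = 12*(a%30) from by omega]
  have e2 : (113:ℕ)^(12*b+3) % p = 113^(12*(b%30)+3) % p := by
    rw [pow_cycle 113 p 360 (12*b+3) h113,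
      show (12*b+3)%360 = 12*(b%30)+3 from by omega]
  exact hall (y % p) (Nat.mod_lt y hp0)
    (by rw [← two_sq_mod y p, h, Nat.add_mod, e1, e2])

-- mod 16 : s ≡ 0 mod 4
lemma s_mod4 (y s t : ℕ) (h : 2*y^2 = 3^s + 113^t) : s % 4 = 0 := by
  have e1 : (3:ℕ)^s % 16 = 3^(s%4) % 16 := pow_cycle 3 16 4 s (by norm_num)
  have e2 : (113:ℕ)^t % 16 = 1 := by rw [Nat.pow_mod]; norm_num
  have key : (2*(y%16)*(y%16)) % 16 = (3^(s%4) % 16 + 1) % 16 := by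
    rw [← two_sq_mod y 16, h, Nat.add_mod, e1, e2]
  have D : ∀ r < 4, ∀ v < 16, (2*v*v) % 16 = (3^r % 16 + 1) % 16 → r = 0 := by decide
  exact D _ (Nat.mod_lt s (by norm_num)) _ (Nat.mod_lt y (by norm_num)) key

-- mod 7 : a ≡ 0 mod 3  (s = 4a)
lemma a_mod3 (y a t : ℕ) (h : 2*y^2 = 3^(4*a) + 113^t) : a % 3 = 0 := by
  have e0 : (3:ℕ)^(4*a) = 81^a := by rw [pow_mul]; norm_num
  have e1 : (81:ℕ)^a % 7 = 81^(a%3) % 7 := pow_cycle 81 7 3 a (by norm_num)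
  have e2 : (113:ℕ)^t % 7 = 1 := by rw [Nat.pow_mod]; norm_num
  have key : (2*(y%7)*(y%7)) % 7 = (81^(a%3) % 7 + 1) % 7 := by
    rw [← two_sq_mod y 7, h, e0, Nat.add_mod, e1, e2]
  have D : ∀ r < 3, ∀ v < 7, (2*v*v) % 7 = (81^r % 7 + 1) % 7 → r = 0 := by decide
  exact D _ (Nat.mod_lt a (by norm_num)) _ (Nat.mod_lt y (by norm_num)) key

-- mod 13 : t ≡ 0 mod 3  (s = 12a)
lemma t_mod3 (y a t : ℕ) (h : 2*y^2 = 3^(12*a) + 113^t) : t % 3 = 0 := by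
  have e0 : (3:ℕ)^(12*a) % 13 = 1 := by rw [pow_mul, Nat.pow_mod]; norm_num
  have e1 : (113:ℕ)^t % 13 = 113^(t%3) % 13 := pow_cycle 113 13 3 t (by norm_num)
  have key : (2*(y%13)*(y%13)) % 13 = (1 + 113^(t%3) % 13) % 13 := by
    rw [← two_sq_mod y 13, h, Nat.add_mod, e0, e1]
  have D : ∀ r < 3, ∀ v < 13, (2*v*v) % 13 = (1 + 113^r % 13) % 13 → r = 0 := by decide
  exact D _ (Nat.mod_lt t (by norm_num)) _ (Nat.mod_lt y (by norm_num)) key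

-- mod 5 : t ≢ 1 mod 4  (s = 12a)
lemma t_mod4 (y a t : ℕ) (h : 2*y^2 = 3^(12*a) + 113^t) : t % 4 ≠ 1 := by
  have e0 : (3:ℕ)^(12*a) % 5 = 1 := by rw [pow_mul, Nat.pow_mod]; norm_num
  have e1 : (113:ℕ)^t % 5 = 113^(t%4) % 5 := pow_cycle 113 5 4 t (by norm_num)
  have key : (2*(y%5)*(y%5)) % 5 = (1 + 113^(t%4) % 5) % 5 := by
    rw [← two_sq_mod y 5, h, Nat.add_mod, e0, e1]
  have D : ∀ r < 4, ∀ v < 5, (2*v*v) % 5 = (1 + 113^r % 5) % 5 → r ≠ 1 := by decide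
  exact D _ (Nat.mod_lt t (by norm_num)) _ (Nat.mod_lt y (by norm_num)) key

-- mod 3 : s ≥ 1 → t odd
lemma t_odd (y s t : ℕ) (hs : 0 < s) (h : 2*y^2 = 3^s + 113^t) : t % 2 = 1 := by
  have e0 : (3:ℕ)^s % 3 = 0 := by
    have : (3:ℕ) ∣ 3^s := dvd_pow_self 3 (by omega)
    omega
  have e1 : (113:ℕ)^t % 3 = 113^(t%2) % 3 := pow_cycle 113 3 2 t (by norm_num)
  have key : (2*(y%3)*(y%3)) % 3 = (0 + 113^(t%2) % 3) % 3 := by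
    rw [← two_sq_mod y 3, h, Nat.add_mod, e0, e1]
  have D : ∀ r < 2, ∀ v < 3, (2*v*v) % 3 = (0 + 113^r % 3) % 3 → r = 1 := by decide
  exact D _ (Nat.mod_lt t (by norm_num)) _ (Nat.mod_lt y (by norm_num)) key


def S : List (ℕ × ℕ) :=
  [(1, 1), (7, 5), (41, 29), (13, 56), (37, 81), (96, 91), (87, 13), (87, 100),
   (96, 22), (37, 32), (13, 57), (41, 84), (7, 108), (1, 112), (112, 112),
   (106, 108), (72, 84), (100, 57), (76, 32), (17, 22), (26, 100), (26, 13),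
   (17, 91), (76, 81), (100, 56), (72, 29), (106, 5), (112, 1)]

lemma S_closed : ∀ q ∈ S, ((3*q.1+4*q.2) % 113, (2*q.1+3*q.2) % 113) ∈ S := by decide

lemma S_ne : ∀ q ∈ S, q.1 ≠ 0 := by decide

lemma pell_mem : ∀ z y : ℕ, z^2 + 1 = 2*y^2 → (z % 113, y % 113) ∈ S := by
  intro z
  induction z using Nat.strong_induction_on with
  | _ z IH =>
    intro y he
    have hy1 : 1 ≤ y := by
      rcases Nat.eq_zero_or_pos y with rfl | h
      · simp at he
      · exact h
    by_cases hy3 : y ≤ 2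
    · interval_cases y
      · -- y = 1 : z = 1
        have hz2 : z^2 = 1 := by omega
        have hz : z = 1 := by nlinarith [hz2, sq_nonneg z]
        subst hz
        decide
      · -- y = 2 : z^2 = 7, impossible
        exfalso
        have hz2 : z^2 = 7 := by omega
        rcases le_or_gt z 2 with h | h
        · have := Nat.pow_le_pow_left h 2
          norm_num at this; omega
        · have : 3^2 ≤ z^2 := Nat.pow_le_pow_left h 2
          norm_num at this; omega
    · push_neg at hy3
      have hy3' : 3 ≤ y := hy3
      have h4 : 4*y ≤ 3*z := by
        have hsq : (4*y)^2 ≤ (3*z)^2 := by nlinarith [he]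
        exact (Nat.pow_le_pow_iff_left (by norm_num)).mp hsq
      have h2 : 2*z ≤ 3*y := by
        have hsq : (2*z)^2 ≤ (3*y)^2 := by nlinarith [he]
        exact (Nat.pow_le_pow_iff_left (by norm_num)).mp hsq
      have hzlt : z < 2*y := by
        have hsq : z^2 < (2*y)^2 := by nlinarith [he]
        exact (Nat.pow_lt_pow_iff_left (by norm_num)).mp hsq
      have he' : (3*z-4*y)^2 + 1 = 2*(3*y-2*z)^2 := by
        have heZ : (z:ℤ)^2 + 1 = 2*(y:ℤ)^2 := by exact_mod_cast he
        zify [h4, h2]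
        linear_combination heZ
      have hlt : 3*z - 4*y < z := by omega
      have mem' := IH (3*z-4*y) hlt (3*y-2*z) he'
      have hstep := S_closed _ mem'
      have hz2 : z % 113 = (3*((3*z-4*y) % 113) + 4*((3*y-2*z) % 113)) % 113 := by omega
      have hy2 : y % 113 = (2*((3*z-4*y) % 113) + 3*((3*y-2*z) % 113)) % 113 := by omega
      rw [hz2, hy2]
      exact hstep

lemma pell113 (z y : ℕ) (he : z^2 + 1 = 2*y^2) : z % 113 ≠ 0 := by
  have hm := pell_mem z y he
  have h0 := S_ne _ hm
  simpa using h0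

lemma mod3_case1 (y k : ℕ) (h : 2*y^2 = 1 + 3*k) : False := by
  have h3 : (2*(y%3)*(y%3)) % 3 = 1 := by
    rw [← two_sq_mod y 3, h]; omega
  have D : ∀ v < 3, (2*v*v) % 3 ≠ 1 := by decide
  exact D _ (Nat.mod_lt y (by norm_num)) h3


lemma pp_split (m n : ℕ) : ∀ d : ℕ, d ∣ 3^m * 113^n → ∃ a b, d = 3^a * 113^b := by
  intro d
  induction d using Nat.strong_induction_on with
  | _ d IH =>
    intro hd
    rcases eq_or_ne d 1 with rfl | h1
    · exact ⟨0, 0, by norm_num⟩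
    have hd0 : d ≠ 0 := by
      rintro rfl
      have h0 : 3^m * 113^n = 0 := Nat.eq_zero_of_zero_dvd hd
      have : 0 < 3^m * 113^n := by positivity
      omega
    obtain ⟨q, hq, hqd⟩ := Nat.exists_prime_and_dvd h1
    have hq3 : q = 3 ∨ q = 113 := by
      have hqp : q ∣ 3^m * 113^n := hqd.trans hd
      rcases (Nat.Prime.dvd_mul hq).mp hqp with h | h
      · exact Or.inl ((Nat.prime_dvd_prime_iff_eq hq (by norm_num)).mp (hq.dvd_of_dvd_pow h))
      · exact Or.inr ((Nat.prime_dvd_prime_iff_eq hq (by norm_num)).mp (hq.dvd_of_dvd_pow h))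
    obtain ⟨e, rfl⟩ := hqd
    have he0 : e ≠ 0 := by rintro rfl; simp at hd0
    have hq2 : 2 ≤ q := hq.two_le
    have helt : e < q * e := by
      calc e = 1 * e := (one_mul e).symm
      _ < q * e := (Nat.mul_lt_mul_right (Nat.pos_of_ne_zero he0)).mpr (by omega)
    have hed : e ∣ 3^m * 113^n := (Dvd.intro_left q rfl).trans hd
    obtain ⟨a, b, rfl⟩ := IH e helt hed
    rcases hq3 with rfl | rfl
    · exact ⟨a+1, b, by ring⟩
    · exact ⟨a, b+1, by ring⟩

lemma sum_case (y s t : ℕ) (hy : 2 ≤ y) (h : 2*y^2 = 3^s + 113^t) : False := by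
  have hs4 := s_mod4 y s t h
  have h4 : 2*y^2 = 3^(4*(s/4)) + 113^t := by
    rw [show 4*(s/4) = s from by omega]; exact h
  have ha3 := a_mod3 y (s/4) t h4
  have h12 : 2*y^2 = 3^(12*(s/12)) + 113^t := by
    rw [show 12*(s/12) = s from by omega]; exact h
  have ht3 := t_mod3 y (s/12) t h12
  have ht4 := t_mod4 y (s/12) t h12
  by_cases hs0 : s = 0
  · subst hs0
    rcases Nat.even_or_odd t with hte | hto
    · -- t even : Pell case
      rcases Nat.eq_zero_or_pos t with rfl | ht0
      · -- t = 0 : 2y^2 = 2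
        norm_num at h
        have : 4 ≤ y*y := Nat.mul_le_mul hy hy
        have hyy : y^2 = y*y := sq y
        omega
      obtain ⟨δ, rfl⟩ := hte
      have hδ : δ ≠ 0 := by omega
      have hzz : (113^δ)^2 = 113^(δ+δ) := by rw [← pow_mul]; ring_nf
      have he' : (113^δ)^2 + 1 = 2*y^2 := by
        rw [hzz]; norm_num at h; omega
      have hd : 113^δ % 113 = 0 := by
        have : (113:ℕ) ∣ 113^δ := dvd_pow_self 113 hδ
        omega
      exact pell113 _ y he' hd
    · -- t odd
      have ht2 : t % 2 = 1 := Nat.odd_iff.mp hto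
      have ht : t = 12*(t/12) + 3 := by omega
      exact L1 y 0 (t/12) (by rw [← ht]; simpa using h)
  · have ht2 := t_odd y s t (by omega) h
    have ht : t = 12*(t/12) + 3 := by omega
    exact L1 y (s/12) (t/12) (by rw [← ht, show 12*(s/12) = s from by omega]; exact h)

end Stmt5Aux

open Stmt5Aux in
theorem stmt5 :
    ¬ ∃ (x y : ℕ) (α β : ℕ), 0 < x ∧ 0 < y ∧ Nat.gcd x y = 1 ∧
      x^2 + 3^α * 113^β = y^4 := by
  rintro ⟨x, y, α, β, hx, hy, hgcd, heq⟩
  have hP : 0 < 3^α * 113^β := by positivity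
  have hxy : x < y^2 := by
    by_contra h
    push_neg at h
    have h2 : (y^2)^2 ≤ x^2 := Nat.pow_le_pow_left h 2
    have h3 : (y^2)^2 = y^4 := by ring
    omega
  have hy2 : 2 ≤ y := by
    by_contra h
    push_neg at h
    interval_cases y
    · norm_num at hxy; omega
  have hy2p : 1 ≤ y^2 := Nat.one_le_pow 2 y (by omega)
  set A := y^2 - x with hA
  set B := y^2 + x with hB
  have hABprod : A * B = 3^α * 113^β := by
    have heqZ : (x:ℤ)^2 + 3^α * 113^β = (y:ℤ)^4 := by exact_mod_cast heq
    have hxyZ : (x:ℤ) ≤ (y:ℤ)^2 := by exact_mod_cast le_of_lt hxy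
    rw [hA, hB]
    zify [le_of_lt hxy]
    linear_combination -heqZ
  have hsum : A + B = 2*y^2 := by omega
  have hBA : B - A = 2*x := by omega
  -- coprimality of A and B
  have hoddP : (3^α * 113^β) % 2 = 1 := by
    have h3 : Odd ((3:ℕ)^α) := Odd.pow (by decide)
    have h113 : Odd ((113:ℕ)^β) := Odd.pow (by decide)
    exact Nat.odd_iff.mp (h3.mul h113)
  have hcop : Nat.Coprime A B := by
    set d := Nat.gcd A B with hd
    have hdA : d ∣ A := Nat.gcd_dvd_left A B
    have hdB : d ∣ B := Nat.gcd_dvd_right A B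
    have hdP : d ∣ 3^α * 113^β := hABprod ▸ hdA.mul_right B
    have hdodd : ¬ 2 ∣ d := by
      intro h2
      have : (2:ℕ) ∣ 3^α * 113^β := h2.trans hdP
      omega
    have hcd2 : Nat.Coprime d 2 := by
      rcases Nat.coprime_or_dvd_of_prime Nat.prime_two d with h | h
      · exact h.symm
      · exact absurd h hdodd
    have hd2x : d ∣ 2*x := hBA ▸ Nat.dvd_sub hdB hdA
    have hd2y : d ∣ 2*y^2 := hsum ▸ Nat.dvd_add hdA hdB
    have hdx : d ∣ x := hcd2.dvd_of_dvd_mul_left hd2x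
    have hdy2 : d ∣ y^2 := hcd2.dvd_of_dvd_mul_left hd2y
    have hcxy2 : Nat.Coprime x (y^2) := (Nat.Coprime.pow_right 2 hgcd)
    have : d ∣ 1 := hcxy2 ▸ Nat.dvd_gcd hdx hdy2
    exact Nat.dvd_one.mp this
  obtain ⟨a1, b1, hA1⟩ := pp_split α β A (hABprod ▸ dvd_mul_right A B)
  obtain ⟨a2, b2, hB1⟩ := pp_split α β B (hABprod ▸ dvd_mul_left B A)
  have ha : a1 = 0 ∨ a2 = 0 := by
    by_contra h
    push_neg at h
    have h3A : 3 ∣ A := hA1 ▸ Dvd.dvd.mul_right (dvd_pow_self 3 h.1) _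
    have h3B : 3 ∣ B := hB1 ▸ Dvd.dvd.mul_right (dvd_pow_self 3 h.2) _
    have h31 : (3:ℕ) ∣ 1 := hcop ▸ Nat.dvd_gcd h3A h3B
    omega
  have hb : b1 = 0 ∨ b2 = 0 := by
    by_contra h
    push_neg at h
    have h3A : 113 ∣ A := hA1 ▸ Dvd.dvd.mul_left (dvd_pow_self 113 h.1) _
    have h3B : 113 ∣ B := hB1 ▸ Dvd.dvd.mul_left (dvd_pow_self 113 h.2) _
    have h31 : (113:ℕ) ∣ 1 := hcop ▸ Nat.dvd_gcd h3A h3B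
    omega
  rcases ha with ha | ha <;> rcases hb with hb | hb
  · -- a1 = 0, b1 = 0 : A = 1
    subst ha; subst hb
    simp only [pow_zero, one_mul, mul_one] at hA1
    rcases Nat.eq_zero_or_pos a2 with ha2 | ha2
    · subst ha2
      simp only [pow_zero, one_mul] at hB1
      exact sum_case y 0 b2 hy2 (by rw [pow_zero]; omega)
    · -- mod 3 contradiction
      have hBk : B = 3*(3^(a2-1) * 113^b2) := by
        have e : (3:ℕ)^a2 = 3 * 3^(a2-1) := by
          rw [← pow_succ' 3 (a2-1)]
          congr 1
          omega
        rw [hB1, e]; ring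
      exact mod3_case1 y (3^(a2-1) * 113^b2) (by omega)
  · -- a1 = 0, b2 = 0 : A = 113^b1, B = 3^a2
    subst ha; subst hb
    simp only [pow_zero, one_mul, mul_one] at hA1 hB1
    exact sum_case y a2 b1 hy2 (by omega)
  · -- a2 = 0, b1 = 0 : A = 3^a1, B = 113^b2
    subst ha; subst hb
    simp only [pow_zero, one_mul, mul_one] at hA1 hB1
    exact sum_case y a1 b2 hy2 (by omega)
  · -- a2 = 0, b2 = 0 : B = 1, impossible
    subst ha; subst hb
    simp only [pow_zero, one_mul, mul_one] at hB1
    omega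
end

section
/- There is no integer s ≥ 2 and non-negative integers a, b such that 7s⁶ − 35s⁴ + 21s² − 1 = 3^a · 113^b. -/
theorem stmt8 :
    ¬ ∃ (s : ℤ) (a b : ℕ), 2 ≤ s ∧
      7*s^6 - 35*s^4 + 21*s^2 - 1 = 3^a * 113^b := by
  rintro ⟨s, a, b, hs, h⟩
  rcases Nat.eq_zero_or_pos a with ha | ha
  · subst ha
    have h4 : ((7*s^6 - 35*s^4 + 21*s^2 - 1 : ℤ) : ZMod 4)
        = ((3^0 * 113^b : ℤ) : ZMod 4) := by exact_mod_cast congrArg _ h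
    push_cast at h4
    have h113 : (113 : ZMod 4) = 1 := by decide
    rw [h113, one_pow, one_mul] at h4
    revert h4
    generalize (s : ZMod 4) = x
    revert x
    decide
  · obtain ⟨a', rfl⟩ := Nat.exists_eq_add_of_le ha
    have h3 : ((7*s^6 - 35*s^4 + 21*s^2 - 1 : ℤ) : ZMod 3)
        = ((3^(1+a') * 113^b : ℤ) : ZMod 3) := by exact_mod_cast congrArg _ h
    push_cast at h3
    have : (3 : ZMod 3) = 0 := by decide
    rw [this, zero_pow (by omega), zero_mul] at h3
    revert h3
    generalize (s : ZMod 3) = x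
    revert x
    decide
end

section
/- If x is odd, d ∈ {1, 113}, e = 3^a·113^b, y is odd, gcd(x, y) = 1, and x² + e²d = y^n, then the ideals generated by x + e√(−d) and x − e√(−d) in the ring of integers of Q(√(−d)) are coprime. -/
open NumberField IntermediateField

set_option maxHeartbeats 1000000 in
/-- If `x` is odd, `d ∈ {1, 113}`, `e = 3^a * 113^b`, `y` odd, `gcd x y = 1`
and `x² + e² d = y^n`, then the ideals of `𝓞 (ℚ(√(-d)))` generated by
`x + e√(-d)` and `x - e√(-d)` are coprime. -/
theorem stmt14 (x y : ℕ) (a b n : ℕ) (d : ℕ) (hd : d = 1 ∨ d = 113)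
    (hx : Odd x) (hy : Odd y) (hgcd : Nat.gcd x y = 1) (hn : 3 ≤ n)
    (e : ℕ) (he : e = 3^a * 113^b)
    (heq : x^2 + e^2 * d = y^n)
    (ξ : ℂ) (hξ : ξ^2 = -(d : ℂ))
    (K : IntermediateField ℚ ℂ) (hK : K = ℚ⟮ξ⟯) [NumberField K]
    (u v : 𝓞 K)
    (hu : ((u : K) : ℂ) = (x : ℂ) + (e : ℂ) * ξ)
    (hv : ((v : K) : ℂ) = (x : ℂ) - (e : ℂ) * ξ) :
    IsCoprime (Ideal.span {u}) (Ideal.span {v}) := by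
  rw [Ideal.isCoprime_span_singleton_iff]
  -- The embedding 𝓞 K → ℂ is injective
  have hinj : Function.Injective (fun z : 𝓞 K => ((z : K) : ℂ)) := by
    intro z w h
    exact Subtype.ext (Subtype.ext h)
  have hcast : ∀ m : ℕ, (((m : 𝓞 K) : K) : ℂ) = (m : ℂ) := by
    intro m; push_cast; ring
  -- u + v = 2x and u * v = y^n in 𝓞 K
  have hsum : u + v = ((2 * x : ℕ) : 𝓞 K) := by
    apply hinj
    show (((u + v : 𝓞 K) : K) : ℂ) = ((((2 * x : ℕ) : 𝓞 K) : K) : ℂ)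
    rw [hcast]
    push_cast [hu, hv]
    ring
  have hprod : u * v = ((y ^ n : ℕ) : 𝓞 K) := by
    apply hinj
    show (((u * v : 𝓞 K) : K) : ℂ) = ((((y ^ n : ℕ) : 𝓞 K) : K) : ℂ)
    rw [hcast, ← heq]
    push_cast [hu, hv]
    linear_combination (-(e : ℂ)^2) * hξ
  -- 2x and y^n are coprime in ℤ
  have hcopN : Nat.Coprime (2 * x) (y ^ n) := by
    apply Nat.Coprime.mul
    · exact (Nat.coprime_two_left.mpr hy).pow_right n
    · exact Nat.Coprime.pow_right n hgcd
  have hcopZ : IsCoprime ((2 * x : ℕ) : ℤ) ((y ^ n : ℕ) : ℤ) :=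
    Nat.isCoprime_iff_coprime.mpr hcopN
  have hcopO : IsCoprime (((2 * x : ℕ) : ℤ) : 𝓞 K) (((y ^ n : ℕ) : ℤ) : 𝓞 K) :=
    hcopZ.map (Int.castRingHom (𝓞 K))
  have hc2 : IsCoprime ((2 * x : ℕ) : 𝓞 K) ((y ^ n : ℕ) : 𝓞 K) := by
    convert hcopO using 2 <;> push_cast <;> ring
  obtain ⟨p, q, hpq⟩ := hc2
  refine ⟨p + q * v, p, ?_⟩
  have h : (p + q * v) * u + p * v = p * (u + v) + q * (u * v) := by ring
  rw [h, hsum, hprod, hpq]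
end

section
/- Let s, t be coprime integers with t · (7s⁶ − 35s⁴t² + 21s²t⁴ − t⁶) = 3^a · 113^b for non-negative integers a, b with 113 ∤ t. Then t = ±1 or t = ±3^a. -/
theorem stmt15 (s t : ℤ) (a b : ℕ) (hcop : IsCoprime s t)
    (h113 : ¬ (113 : ℤ) ∣ t)
    (h : t * (7*s^6 - 35*s^4*t^2 + 21*s^2*t^4 - t^6) = 3^a * 113^b) :
    t = 1 ∨ t = -1 ∨ t = 3^a ∨ t = -(3^a : ℤ) := by
  have p3 : Prime (3 : ℤ) := Int.prime_three
  have p113 : Prime (113 : ℤ) := by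
    rw [Int.prime_iff_natAbs_prime]; norm_num
  set Q : ℤ := 7*s^6 - 35*s^4*t^2 + 21*s^2*t^4 - t^6 with hQ
  have htdvd : t ∣ 3^a * 113^b := ⟨Q, h.symm⟩
  -- t coprime to 113^b
  have hc113 : IsCoprime t ((113:ℤ)^b) :=
    IsCoprime.pow_right (((p113.coprime_iff_not_dvd).2 h113).symm)
  have ht3a : t ∣ (3:ℤ)^a := hc113.dvd_of_dvd_mul_right htdvd
  by_cases h3 : (3:ℤ) ∣ t
  · -- 3 ∤ Q
    have hQ3 : ¬ (3:ℤ) ∣ Q := by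
      intro hdvd
      have h7s : (3:ℤ) ∣ 7 * s^6 := by
        have : (7:ℤ)*s^6 = Q + 35*s^4*t^2 - 21*s^2*t^4 + t^6 := by ring
        rw [this]
        have ht2 : (3:ℤ) ∣ t^2 := dvd_pow h3 (by norm_num)
        exact dvd_add (dvd_sub (dvd_add hdvd (ht2.mul_left _))
          ((dvd_pow h3 (by norm_num)).mul_left _)) (dvd_pow h3 (by norm_num))
      rcases p3.dvd_mul.1 h7s with h7 | hs6
      · norm_num at h7
      · have hs : (3:ℤ) ∣ s := p3.dvd_of_dvd_pow hs6
        exact (by decide : ¬ IsUnit (3:ℤ)) (hcop.isUnit_of_dvd' hs h3)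
    have hcQ : IsCoprime ((3:ℤ)^a) Q :=
      IsCoprime.pow_left ((p3.coprime_iff_not_dvd).2 hQ3)
    have h3at : (3:ℤ)^a ∣ t :=
      hcQ.dvd_of_dvd_mul_right ⟨113^b, h⟩
    have habs : t.natAbs = ((3:ℤ)^a).natAbs :=
      Nat.dvd_antisymm (Int.natAbs_dvd_natAbs.2 ht3a) (Int.natAbs_dvd_natAbs.2 h3at)
    rcases Int.natAbs_eq t with he | he
    · right; right; left
      rw [he, habs, Int.natAbs_pow]; norm_num
    · right; right; right
      rw [he, habs, Int.natAbs_pow]; norm_num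
  · -- t coprime to 3, so t ∣ 1
    have hc3 : IsCoprime t ((3:ℤ)^a) :=
      IsCoprime.pow_right (((p3.coprime_iff_not_dvd).2 h3).symm)
    have ht1 : IsUnit t := (hc3.mul_right hc113).isUnit_of_dvd' dvd_rfl htdvd
    rcases Int.isUnit_iff.1 ht1 with h1 | h1
    · exact Or.inl h1
    · exact Or.inr (Or.inl h1)
end

section
/- The only pairs of coprime positive integers (x, y) with x² + 3^α·113^β = y³ for non-negative integers α ≤ 5 with β = 0 are (x, y, α) = (46, 13, 4) and (10, 7, 5). -/
/-!
For even `α` the equation reads `x² + m² = y³` with `m = 3^(α/2)`. The factors `x ± m i` are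
coprime in `ℤ[i]`, whose units are cubes, so `x + m i = (a + b i)³`; then `m = b (3a² - b²)`
leaves finitely many `(a, b)`.

For `α = 3, 5` it reads `x² + 3m² = y³` with `3 ∣ m`. In the PID `ℤ[ω]`, `ω² + ω + 1 = 0`,
the factors `(x + m) + 2mω` and `(x - m) - 2mω` are coprime, so `(x + m) + 2mω = u (a + bω)³`
for a unit `u`. Since `3 ∤ x`, comparing coordinates modulo `3` rules out `u ≠ ±1`, and then
`2m = 3ab(a - b)` again leaves finitely many cases.

For `α = 1` one finds `y ≡ 3 (mod 4)`, and then the odd number `y² - y + 1 ≡ 3 (mod 4)`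
divides `x² + 2²`, which is impossible: `-1` would be a square modulo it.
-/

open NumberField Polynomial

theorem IsCoprime.of_isCoprime_mul_sub {R : Type*} [CommRing R] {p q : R}
    (h : IsCoprime (p * q) (p - q)) : IsCoprime p q := by
  obtain ⟨s, t, hst⟩ := h
  exact ⟨s * q + t, -t, by linear_combination hst⟩

theorem GaussianInt.exists_pow_three_eq_of_isUnit {u : GaussianInt} (hu : IsUnit u) :
    ∃ v, v ^ 3 = u := by
  have hn := (Zsqrtd.norm_eq_one_iff' (by norm_num) u).2 hu
  obtain ⟨a, b⟩ := u
  simp only [Zsqrtd.norm_def] at hn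
  obtain ⟨ha1, ha2⟩ : -1 ≤ a ∧ a ≤ 1 := by constructor <;> nlinarith [sq_nonneg b]
  obtain ⟨hb1, hb2⟩ : -1 ≤ b ∧ b ≤ 1 := by constructor <;> nlinarith [sq_nonneg a]
  -- the units of `ℤ[i]` have order dividing `4`, so `u = (u ^ 3) ^ 3`
  refine ⟨⟨a, b⟩ ^ 3, ?_⟩
  interval_cases a <;> interval_cases b <;> first | omega | decide

/-- `x + m i = (a + b i)³` in `ℤ[i]`. -/
theorem exists_cube_of_sq_add_sq_eq_cube {x m y : ℤ} (h : x ^ 2 + m ^ 2 = y ^ 3)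
    (hy : IsCoprime y (2 * m)) :
    ∃ a b : ℤ, x = a ^ 3 - 3 * a * b ^ 2 ∧ m = 3 * a ^ 2 * b - b ^ 3 := by
  let p : GaussianInt := ⟨x, m⟩
  have hpq : p * star p = (y : GaussianInt) ^ 3 := by
    rw [← Zsqrtd.norm_eq_mul_conj, Zsqrtd.norm_def, ← Int.cast_pow, ← h]
    congr 1
    simp only [p]
    ring
  have hcop : IsCoprime p (star p) := by
    refine IsCoprime.of_isCoprime_mul_sub ?_
    have hsq : (p - star p) ^ 2 = ((-(2 * m) ^ 2 : ℤ) : GaussianInt) := by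
      ext
      · simp only [p, pow_two, Zsqrtd.star_mk, Zsqrtd.re_mul, Zsqrtd.re_sub, Zsqrtd.im_sub,
          Zsqrtd.re_intCast]
        ring
      · simp [p, pow_two]
    rw [hpq, ← IsCoprime.pow_right_iff two_pos, hsq, ← Int.cast_pow]
    exact (hy.pow_right.neg_right.pow_left).map (Int.castRingHom GaussianInt)
  obtain ⟨d, u, hu⟩ := exists_associated_pow_of_mul_eq_pow' hcop hpq
  obtain ⟨v, hv⟩ := GaussianInt.exists_pow_three_eq_of_isUnit u.isUnit
  have hp : p = (d * v) ^ 3 := by rw [← hu, ← hv]; ring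
  generalize d * v = e at hp
  refine ⟨e.re, e.im, ?_, ?_⟩
  · have := congrArg Zsqrtd.re hp
    simp only [pow_succ, pow_zero, one_mul, Zsqrtd.re_mul, Zsqrtd.im_mul, p] at this
    linear_combination this
  · have := congrArg Zsqrtd.im hp
    simp only [pow_succ, pow_zero, one_mul, Zsqrtd.re_mul, Zsqrtd.im_mul, p] at this
    linear_combination this

namespace IsPrimitiveRoot

variable {K : Type*} [Field K] {ζ : K} (hζ : IsPrimitiveRoot ζ 3)
include hζ

theorem toInteger_sq_add_toInteger_add_one : hζ.toInteger ^ 2 + hζ.toInteger + 1 = 0 := by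
  simpa using IsCyclotomicExtension.Rat.Three.eta_sq_add_eta_add_one hζ

theorem intCast_add_mul_toInteger_inj [CharZero K] {a b c e : ℤ}
    (h : (a : 𝓞 K) + b * hζ.toInteger = c + e * hζ.toInteger) : a = c ∧ b = e := by
  have hnorm : (((a - c) ^ 2 - (a - c) * (b - e) + (b - e) ^ 2 : ℤ) : 𝓞 K) = 0 := by
    push_cast
    linear_combination (↑a - ↑c + (↑b - ↑e) * hζ.toInteger ^ 2) * h
      - ((b - e : 𝓞 K) ^ 2 * (hζ.toInteger - 1) + (a - c) * (b - e))
        * hζ.toInteger_sq_add_toInteger_add_one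
  have := Int.cast_eq_zero.mp hnorm
  constructor <;> nlinarith [sq_nonneg (a - c - (b - e)), sq_nonneg (a - c), sq_nonneg (b - e)]

theorem intCast_add_mul_toInteger_pow_three (a b : ℤ) :
    ((a : 𝓞 K) + b * hζ.toInteger) ^ 3 =
      ((a ^ 3 - 3 * a * b ^ 2 + b ^ 3 : ℤ) : 𝓞 K) +
        (3 * a ^ 2 * b - 3 * a * b ^ 2 : ℤ) * hζ.toInteger := by
  push_cast
  linear_combination (b ^ 3 * hζ.toInteger + 3 * a * b ^ 2 - b ^ 3 : 𝓞 K) *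
    hζ.toInteger_sq_add_toInteger_add_one

variable [NumberField K] [IsCyclotomicExtension {3} ℚ K]

theorem exists_eq_intCast_add_mul_toInteger (z : 𝓞 K) :
    ∃ a b : ℤ, z = a + b * hζ.toInteger := by
  obtain ⟨f, hdeg, rfl⟩ := hζ.integralPowerBasis.exists_eq_aeval z
  rw [integralPowerBasis_dim, show Nat.totient 3 = 2 by decide] at hdeg
  refine ⟨f.coeff 0, f.coeff 1, ?_⟩
  conv_lhs => rw [eq_X_add_C_of_natDegree_le_one (by omega : f.natDegree ≤ 1)]
  simp [add_comm]

theorem exists_associated_cube_of_sq_add_three_mul_sq_eq_cube {x m y : ℤ}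
    (h : x ^ 2 + 3 * m ^ 2 = y ^ 3) (hy3 : IsCoprime y 3) (hy : IsCoprime y (2 * m)) :
    ∃ d : 𝓞 K, Associated (d ^ 3) ((x + m : 𝓞 K) + 2 * m * hζ.toInteger) := by
  have := IsCyclotomicExtension.Rat.three_pid K
  have hη := hζ.toInteger_sq_add_toInteger_add_one
  have hpq : ((x + m : 𝓞 K) + 2 * m * hζ.toInteger) * ((x - m) - 2 * m * hζ.toInteger) =
      (y : 𝓞 K) ^ 3 := by
    rw [← Int.cast_pow, ← h]
    push_cast
    linear_combination (-4 * (m : 𝓞 K) ^ 2) * hη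
  refine exists_associated_pow_of_mul_eq_pow' (IsCoprime.of_isCoprime_mul_sub ?_) hpq
  have hsq : ((x + m : 𝓞 K) + 2 * m * hζ.toInteger - ((x - m) - 2 * m * hζ.toInteger)) ^ 2 =
      ((-3 * (2 * m) ^ 2 : ℤ) : 𝓞 K) := by
    push_cast
    linear_combination (16 * (m : 𝓞 K) ^ 2) * hη
  rw [hpq, ← IsCoprime.pow_right_iff two_pos, hsq, ← Int.cast_pow]
  exact (hy3.neg_right.mul_right hy.pow_right).pow_left.map (Int.castRingHom (𝓞 K))

theorem exists_cube_of_sq_add_three_mul_sq_eq_cube {x m y : ℤ} (h : x ^ 2 + 3 * m ^ 2 = y ^ 3)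
    (hy3 : IsCoprime y 3) (hy : IsCoprime y (2 * m)) (hm : 3 ∣ m) (hx : ¬ 3 ∣ x) :
    ∃ a b : ℤ, x + m = a ^ 3 - 3 * a * b ^ 2 + b ^ 3 ∧
      2 * m = 3 * a ^ 2 * b - 3 * a * b ^ 2 := by
  obtain ⟨d, u, hu⟩ := hζ.exists_associated_cube_of_sq_add_three_mul_sq_eq_cube h hy3 hy
  obtain ⟨a, b, rfl⟩ := hζ.exists_eq_intCast_add_mul_toInteger d
  rw [hζ.intCast_add_mul_toInteger_pow_three] at hu
  generalize hP : a ^ 3 - 3 * a * b ^ 2 + b ^ 3 = P at hu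
  generalize hQ : 3 * a ^ 2 * b - 3 * a * b ^ 2 = Q at hu
  have h3Q : 3 ∣ Q := hQ ▸ ⟨a ^ 2 * b - a * b ^ 2, by ring⟩
  set η := hζ.toInteger
  have hη : η ^ 2 + η + 1 = 0 := hζ.toInteger_sq_add_toInteger_add_one
  have hcoord (A B : ℤ) (hAB : (A : 𝓞 K) + B * η = x + m + 2 * m * η) :
      A = x + m ∧ B = 2 * m :=
    hζ.intCast_add_mul_toInteger_inj (by push_cast; exact hAB)
  have hU := IsCyclotomicExtension.Rat.Three.Units.mem hζ u
  simp only [List.mem_cons, List.not_mem_nil, or_false] at hU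
  rcases hU with rfl | rfl | rfl | rfl | rfl | rfl <;>
    simp only [Units.val_one, Units.val_neg, Units.val_pow_eq_pow_val, IsUnit.unit_spec, mul_one,
      mul_neg] at hu
  · obtain ⟨h1, h2⟩ := hcoord P Q hu
    exact ⟨a, b, by omega, by omega⟩
  · obtain ⟨h1, h2⟩ := hcoord (-P) (-Q) (by push_cast; linear_combination hu)
    exact ⟨-a, -b, by linarith, by linarith⟩
  -- for the units `±ω`, `±ω²` the coordinates force `3 ∣ x`
  · obtain ⟨h1, -⟩ := hcoord (-Q) (P - Q) (by push_cast; linear_combination hu - Q * hη)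
    omega
  · obtain ⟨h1, -⟩ := hcoord Q (Q - P) (by push_cast; linear_combination hu + Q * hη)
    omega
  · obtain ⟨h1, h2⟩ :=
      hcoord (Q - P) (-P) (by push_cast; linear_combination hu - (P + Q * (η - 1)) * hη)
    omega
  · obtain ⟨h1, h2⟩ :=
      hcoord (P - Q) P (by push_cast; linear_combination hu + (P + Q * (η - 1)) * hη)
    omega

end IsPrimitiveRoot

/-- `(x + m) + 2mω = (a + bω)³` in `ℤ[ω]`, where `ω² + ω + 1 = 0`. -/
theorem exists_cube_of_sq_add_three_mul_sq_eq_cube {x m y : ℤ} (h : x ^ 2 + 3 * m ^ 2 = y ^ 3)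
    (hy : IsCoprime y (2 * m)) (hm : 3 ∣ m) :
    ∃ a b : ℤ, x + m = a ^ 3 - 3 * a * b ^ 2 + b ^ 3 ∧
      2 * m = 3 * a ^ 2 * b - 3 * a * b ^ 2 := by
  have hy3 : IsCoprime y 3 := hy.of_isCoprime_of_dvd_right (hm.mul_left 2)
  have hx : ¬ 3 ∣ x := fun hx ↦ by
    have h3y : 3 ∣ y := Int.prime_three.dvd_of_dvd_pow (n := 3) <|
      h ▸ dvd_add (dvd_pow hx two_ne_zero) (dvd_mul_right 3 _)
    exact absurd (hy3.isUnit_of_dvd' h3y dvd_rfl) (by decide)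
  -- Mathlib's instance uses `CyclotomicField.algebra`, which is only propositionally equal to
  -- the canonical `ℚ`-algebra structure, so instance search does not find it
  have : IsCyclotomicExtension {3} ℚ (CyclotomicField 3 ℚ) := by
    convert CyclotomicField.isCyclotomicExtension 3 ℚ
    · rfl
    · exact Subsingleton.elim _ _
  exact IsPrimitiveRoot.exists_cube_of_sq_add_three_mul_sq_eq_cube
    (IsCyclotomicExtension.zeta_spec 3 ℚ (CyclotomicField 3 ℚ)) h hy3 hy hm hx

theorem Nat.mod_four_ne_three_of_dvd_sq_add_sq {n a b : ℕ} (hb : b.Coprime n)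
    (h : n ∣ a ^ 2 + b ^ 2) : n % 4 ≠ 3 := by
  have hab : (a : ZMod n) ^ 2 + (b : ZMod n) ^ 2 = 0 := by
    exact_mod_cast (ZMod.natCast_eq_zero_iff _ _).mpr h
  have hb' : (b : ZMod n) * (b : ZMod n)⁻¹ = 1 := ZMod.coe_mul_inv_eq_one b hb
  have hsq : IsSquare (-1 : ZMod n) := ⟨a * (b : ZMod n)⁻¹, by
    linear_combination (-(b : ZMod n)⁻¹ ^ 2) * hab + ((b : ZMod n) * (b : ZMod n)⁻¹ + 1) * hb'⟩
  obtain ⟨c, d, rfl⟩ := Nat.eq_sq_add_sq_of_isSquare_mod_neg_one hsq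
  rcases Nat.even_or_odd c with ⟨c, rfl⟩ | ⟨c, rfl⟩ <;>
    rcases Nat.even_or_odd d with ⟨d, rfl⟩ | ⟨d, rfl⟩ <;> ring_nf <;> omega

theorem odd_of_sq_add_three_pow_eq_cube {x y α : ℕ} (h : x ^ 2 + 3 ^ α = y ^ 3) : Odd y := by
  by_contra hy
  obtain ⟨t, rfl⟩ := Nat.not_odd_iff_even.mp hy
  have h8 : (x : ZMod 8) ^ 2 + 3 ^ α = ((t : ZMod 8) + t) ^ 3 := by
    exact_mod_cast congrArg (Nat.cast : ℕ → ZMod 8) h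
  have h3 : (3 : ZMod 8) ^ α = 1 ∨ (3 : ZMod 8) ^ α = 3 := by
    rw [← Nat.div_add_mod α 2, pow_add, pow_mul, show (3 : ZMod 8) ^ 2 = 1 by decide, one_pow,
      one_mul]
    rcases Nat.mod_two_eq_zero_or_one α with h | h <;> simp [h]
  have key : ∀ a b : ZMod 8, a ^ 2 + 1 ≠ (b + b) ^ 3 ∧ a ^ 2 + 3 ≠ (b + b) ^ 3 := by decide
  rcases h3 with h3 | h3 <;> rw [h3] at h8
  exacts [(key _ _).1 h8, (key _ _).2 h8]

theorem not_dvd_of_sq_add_eq_cube {p x y c : ℕ} (hp : p.Prime) (hc : p ∣ c) (hxy : x.Coprime y)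
    (h : x ^ 2 + c = y ^ 3) : ¬ p ∣ y := by
  intro hy
  have hx : p ∣ x :=
    hp.dvd_of_dvd_pow (n := 2) <| (Nat.dvd_add_left hc).mp (h ▸ dvd_pow hy three_ne_zero)
  exact hp.one_lt.ne' (Nat.eq_one_of_dvd_one (hxy ▸ Nat.dvd_gcd hx hy))

theorem isCoprime_two_mul_three_pow {y : ℕ} (h2 : Odd y) (h3 : ¬ 3 ∣ y) (k : ℕ) :
    IsCoprime (y : ℤ) (2 * 3 ^ k) := by
  have h3' : y.Coprime 3 := ((Nat.Prime.coprime_iff_not_dvd Nat.prime_three).mpr h3).symm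
  exact_mod_cast Nat.isCoprime_iff_coprime.mpr
    ((Nat.coprime_two_right.mpr h2).mul_right (h3'.pow_right k))

theorem sq_add_one_ne_cube {x y : ℕ} (hx : 0 < x) (hy : Odd y) : x ^ 2 + 1 ≠ y ^ 3 := by
  intro h
  obtain ⟨a, b, hxab, hab⟩ := exists_cube_of_sq_add_sq_eq_cube (x := x) (m := 1) (y := y)
    (by exact_mod_cast h) (by simpa using Nat.isCoprime_iff_coprime.mpr hy.coprime_two_right)
  have hb : b ∣ 1 := ⟨3 * a ^ 2 - b ^ 2, by linear_combination hab⟩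
  rcases Int.isUnit_iff.mp (isUnit_of_dvd_one hb) with rfl | rfl
  · generalize a ^ 2 = s at hab
    omega
  · obtain rfl : a = 0 := pow_eq_zero_iff two_ne_zero |>.mp (by linarith)
    omega

theorem sq_add_three_ne_cube {x y : ℕ} (hy : Odd y) : x ^ 2 + 3 ≠ y ^ 3 := by
  intro h
  have hy4 : y % 4 = 3 := by
    obtain ⟨k, rfl⟩ := hy
    have h4 : (x : ZMod 4) ^ 2 + 3 = (2 * k + 1 : ZMod 4) ^ 3 := by
      exact_mod_cast congrArg (Nat.cast : ℕ → ZMod 4) h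
    have key : ∀ a b : ZMod 4, a ^ 2 + 3 = (2 * b + 1) ^ 3 → 2 * b + 1 = 3 := by decide
    have h3 : ((2 * k + 1 : ℕ) : ZMod 4) = (3 : ℕ) := by exact_mod_cast key _ _ h4
    exact (ZMod.natCast_eq_natCast_iff' _ _ _).mp h3
  obtain ⟨z, rfl⟩ : ∃ z, y = z + 1 := ⟨y - 1, by omega⟩
  have hdvd : z ^ 2 + z + 1 ∣ x ^ 2 + 2 ^ 2 :=
    ⟨z + 2, by rw [show x ^ 2 + 2 ^ 2 = (z + 1) ^ 3 + 1 by omega]; ring⟩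
  have hodd : Odd (z ^ 2 + z + 1) := by
    rw [show z ^ 2 + z + 1 = z * (z + 1) + 1 by ring]
    exact (Nat.even_mul_succ_self z).add_one
  apply Nat.mod_four_ne_three_of_dvd_sq_add_sq (Nat.coprime_two_left.mpr hodd) hdvd
  obtain ⟨k, rfl⟩ : ∃ k, z = 4 * k + 2 := ⟨z / 4, by omega⟩
  ring_nf
  omega

theorem sq_add_three_pow_two_ne_cube {x y : ℕ} (hy2 : Odd y) (hy3 : ¬ 3 ∣ y) :
    x ^ 2 + 3 ^ 2 ≠ y ^ 3 := by
  intro h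
  obtain ⟨a, b, -, hab⟩ := exists_cube_of_sq_add_sq_eq_cube (x := x) (m := 3) (y := y)
    (by exact_mod_cast h) (by simpa using isCoprime_two_mul_three_pow hy2 hy3 1)
  have hb := Int.natAbs_le_of_dvd_ne_zero
    (⟨3 * a ^ 2 - b ^ 2, by linear_combination hab⟩ : b ∣ 3) (by norm_num)
  generalize a ^ 2 = s at hab
  obtain ⟨hb1, hb2⟩ : -3 ≤ b ∧ b ≤ 3 := by omega
  interval_cases b <;> omega

theorem sq_add_three_pow_three_ne_cube {x y : ℕ} (hx : 0 < x) (hy2 : Odd y) (hy3 : ¬ 3 ∣ y) :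
    x ^ 2 + 3 ^ 3 ≠ y ^ 3 := by
  intro h
  have hZ : (x : ℤ) ^ 2 + 3 ^ 3 = (y : ℤ) ^ 3 := by exact_mod_cast h
  obtain ⟨a, b, hP, hQ⟩ := exists_cube_of_sq_add_three_mul_sq_eq_cube (x := x) (m := 3) (y := y)
    (by linear_combination hZ) (by simpa using isCoprime_two_mul_three_pow hy2 hy3 1) dvd_rfl
  have h2 : a * (b * (a - b)) = 2 := by linarith
  have ha := Int.natAbs_le_of_dvd_ne_zero (Dvd.intro _ h2) (by norm_num)
  have hb := Int.natAbs_le_of_dvd_ne_zero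
    (Dvd.intro_left _ (by linear_combination h2 : a * (a - b) * b = 2)) (by norm_num)
  obtain ⟨ha1, ha2⟩ : -2 ≤ a ∧ a ≤ 2 := by omega
  obtain ⟨hb1, hb2⟩ : -2 ≤ b ∧ b ≤ 2 := by omega
  interval_cases a <;> interval_cases b <;> norm_num at h2 <;> norm_num at hP <;> omega

theorem eq_of_sq_add_three_pow_four_eq_cube {x y : ℕ} (hy2 : Odd y) (hy3 : ¬ 3 ∣ y)
    (h : x ^ 2 + 3 ^ 4 = y ^ 3) : x = 46 ∧ y = 13 := by
  have hZ : (x : ℤ) ^ 2 + 3 ^ 4 = (y : ℤ) ^ 3 := by exact_mod_cast h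
  obtain ⟨a, b, hxab, hab⟩ := exists_cube_of_sq_add_sq_eq_cube (x := x) (m := 3 ^ 2)
    (y := y) (by linear_combination hZ) (isCoprime_two_mul_three_pow hy2 hy3 2)
  have hb := Int.natAbs_le_of_dvd_ne_zero
    (⟨3 * a ^ 2 - b ^ 2, by linear_combination hab⟩ : b ∣ 3 ^ 2) (by norm_num)
  obtain ⟨hb1, hb2⟩ : -9 ≤ b ∧ b ≤ 9 := by omega
  obtain ⟨rfl, ha⟩ : b = 3 ∧ a ^ 2 = 4 := by
    generalize hs : a ^ 2 = s at hab
    interval_cases b <;> try omega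
    -- `b = -3` is left, with `a ^ 2 = 2`
    obtain ⟨ha1, ha2⟩ : -1 ≤ a ∧ a ≤ 1 := by constructor <;> nlinarith
    interval_cases a <;> omega
  have hx : x = 46 := by
    have ha' : a ^ 2 = 2 ^ 2 := by rw [ha]; norm_num
    rcases sq_eq_sq_iff_eq_or_eq_neg.mp ha' with rfl | rfl <;> norm_num at hxab <;> omega
  subst hx
  exact ⟨rfl, Nat.pow_left_injective three_ne_zero (h.symm.trans (by norm_num))⟩

theorem eq_of_sq_add_three_pow_five_eq_cube {x y : ℕ} (hy2 : Odd y) (hy3 : ¬ 3 ∣ y)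
    (h : x ^ 2 + 3 ^ 5 = y ^ 3) : x = 10 ∧ y = 7 := by
  have hZ : (x : ℤ) ^ 2 + 3 ^ 5 = (y : ℤ) ^ 3 := by exact_mod_cast h
  obtain ⟨a, b, hP, hQ⟩ := exists_cube_of_sq_add_three_mul_sq_eq_cube (x := x) (m := 3 ^ 2)
    (y := y) (by linear_combination hZ) (isCoprime_two_mul_three_pow hy2 hy3 2)
    (dvd_pow_self 3 two_ne_zero)
  have h6 : a * (b * (a - b)) = 6 := by linarith
  have ha := Int.natAbs_le_of_dvd_ne_zero (Dvd.intro _ h6) (by norm_num)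
  have hb := Int.natAbs_le_of_dvd_ne_zero
    (Dvd.intro_left _ (by linear_combination h6 : a * (a - b) * b = 6)) (by norm_num)
  obtain ⟨ha1, ha2⟩ : -6 ≤ a ∧ a ≤ 6 := by omega
  obtain ⟨hb1, hb2⟩ : -6 ≤ b ∧ b ≤ 6 := by omega
  have hx : x = 10 := by
    interval_cases a <;> interval_cases b <;> norm_num at h6 <;> norm_num at hP <;> omega
  subst hx
  exact ⟨rfl, Nat.pow_left_injective three_ne_zero (h.symm.trans (by norm_num))⟩

theorem stmt17_general (x y α : ℕ) (hx : 0 < x)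
    (hgcd : Nat.gcd x y = 1) (hα : α ≤ 5)
    (heq : x^2 + 3^α * 113^0 = y^3) :
    (x = 46 ∧ y = 13 ∧ α = 4) ∨ (x = 10 ∧ y = 7 ∧ α = 5) := by
  rw [pow_zero, mul_one] at heq
  have hy2 : Odd y := odd_of_sq_add_three_pow_eq_cube heq
  have hy3 (hα : α ≠ 0) : ¬ 3 ∣ y :=
    not_dvd_of_sq_add_eq_cube Nat.prime_three (dvd_pow_self 3 hα) hgcd heq
  interval_cases α
  · exact absurd heq (sq_add_one_ne_cube hx hy2)
  · exact absurd heq (sq_add_three_ne_cube hy2)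
  · exact absurd heq (sq_add_three_pow_two_ne_cube hy2 (hy3 two_ne_zero))
  · exact absurd heq (sq_add_three_pow_three_ne_cube hx hy2 (hy3 three_ne_zero))
  · obtain ⟨rfl, rfl⟩ := eq_of_sq_add_three_pow_four_eq_cube hy2 (hy3 four_ne_zero) heq
    exact Or.inl ⟨rfl, rfl, rfl⟩
  · obtain ⟨rfl, rfl⟩ := eq_of_sq_add_three_pow_five_eq_cube hy2 (hy3 (by norm_num)) heq
    exact Or.inr ⟨rfl, rfl, rfl⟩

theorem stmt17 (x y α : ℕ) (hx : 0 < x) (hy : 0 < y)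
    (hgcd : Nat.gcd x y = 1) (hα : α ≤ 5)
    (heq : x^2 + 3^α * 113^0 = y^3) :
    (x = 46 ∧ y = 13 ∧ α = 4) ∨ (x = 10 ∧ y = 7 ∧ α = 5) :=
  stmt17_general x y α hx hgcd hα heq
end
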